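/- arXiv:2604.26605 — 3 statements merged into one kernel-verified Lean document; each statement's English description precedes it below -/
import Mathlib

section
/- Suppose a bipartite quantum distribution $p_Q(a,b|x,y)$ satisfies: for every collection of outcomes $\boldsymbol\alpha=[\alpha_1,\dots,\alpha_n]$ of Alice there exists an input $y_{\boldsymbol\alpha}$ of Bob such that $p_Q(a=\alpha_x, b=x | x, y_{\boldsymbol\alpha}) = 0$ for all $x\in[n]$. Then $p_Q$ has zero local content: there is no decomposition $p_Q = q\,p_L + (1-q)\,p_{NL}$ with $q>0$ and $p_L$ local. -/
/-- The deterministic local strategy `D_{α,β}(a,b|x,y) = δ_{α_x,a} δ_{β_y,b}`. -/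
noncomputable def detStrategy {A B X Y : Type*} [DecidableEq A] [DecidableEq B]
    (α : X → A) (β : Y → B) (a : A) (b : B) (x : X) (y : Y) : ℝ :=
  if α x = a ∧ β y = b then 1 else 0

/-- If for every output assignment `α` of Alice there is an input of Bob whose
outcomes exclude `α` (via zeros of the distribution), then `p_Q` has zero local
content. Here Alice has inputs `x ∈ Fin n` and outputs in `Fin mA`, and Bob has
inputs in `Y` and outputs in `Fin n`; `pQ a b x y` denotes `p_Q(a,b|x,y)`. -/
theorem zero_local_content_of_antidistinguishing_zeros
    (n mA : ℕ) {Y : Type*} [Fintype Y] [DecidableEq Y]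
    (pQ : Fin mA → Fin n → Fin n → Y → ℝ)
    (hp0 : ∀ a b x y, 0 ≤ pQ a b x y) (hp1 : ∀ x y, ∑ a, ∑ b, pQ a b x y = 1)
    (hzeros : ∀ α : Fin n → Fin mA, ∃ y : Y, ∀ x : Fin n, pQ (α x) x x y = 0) :
    ¬ ∃ (q : ℝ) (pL pNL : Fin mA → Fin n → Fin n → Y → ℝ),
        0 < q ∧ q ≤ 1 ∧
        (∃ μ : ((Fin n → Fin mA) × (Y → Fin n)) → ℝ,
          (∀ s, 0 ≤ μ s) ∧ (∑ s, μ s = 1) ∧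
          (∀ a b x y, pL a b x y = ∑ s, μ s * detStrategy s.1 s.2 a b x y)) ∧
        (∀ a b x y, 0 ≤ pNL a b x y) ∧
        (∀ x y, ∑ a, ∑ b, pNL a b x y = 1) ∧
        (∀ a b x y, pQ a b x y = q * pL a b x y + (1 - q) * pNL a b x y) := by
  rintro ⟨q, pL, pNL, hq, hq1, ⟨μ, hμ0, hμ1, hμL⟩, hNL0, _, hdec⟩
  -- find a strategy with positive weight
  obtain ⟨s, hs⟩ : ∃ s, 0 < μ s := by
    by_contra h
    push_neg at h
    have : (∑ s, μ s) = 0 :=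
      Finset.sum_eq_zero fun s _ => le_antisymm (h s) (hμ0 s)
    simp [hμ1] at this
  obtain ⟨α, β⟩ := s
  obtain ⟨y, hy⟩ := hzeros α
  set x := β y with hx
  have hdet : detStrategy α β (α x) x x y = 1 := by
    simp [detStrategy, hx]
  have hLlb : μ (α, β) ≤ pL (α x) x x y := by
    rw [hμL]
    calc μ (α, β) = μ (α, β) * detStrategy α β (α x) x x y := by rw [hdet]; ring
    _ ≤ ∑ t, μ t * detStrategy t.1 t.2 (α x) x x y := by
        refine Finset.single_le_sum (f := fun t => μ t * detStrategy t.1 t.2 (α x) x x y)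
          (fun t _ => mul_nonneg (hμ0 t) ?_) (Finset.mem_univ (α, β))
        unfold detStrategy; positivity
  have hlb : q * μ (α, β) ≤ pQ (α x) x x y := by
    rw [hdec]
    have h1 : q * μ (α, β) ≤ q * pL (α x) x x y := by
      exact mul_le_mul_of_nonneg_left hLlb hq.le
    nlinarith [hNL0 (α x) x x y]
  have := hy x
  nlinarith
end

section
/- Let $\ket{\psi^B_{a|x}}$ be the vectors in $\mathbb{C}^d$ defined by $\ket{\psi^B_{a|1}}=\ket{a}$ and, for $x\ne 1$, $\ket{\psi^B_{a|x}}=\sum_{j=0}^{d-1}\sqrt{\lambda_j}\,e^{-i\phi^j_{a|x}}\ket{j}$, where $\lambda_j\ge0$, $\sum_j\lambda_j=1$, and the phases arise from a collection of mutually unbiased bases $\ket{A_{a|x}}=\frac{1}{\sqrt d}\sum_j e^{i\phi^j_{a|x}}\ket j$ satisfying $|\langle A_{a|x}|A_{a'|x'}\rangle|=1/\sqrt d$ for $x\ne x'$. Then for any real $\lambda \ge 0$ and any $x\ne x'$ with $x,x'\ne 1$: $|\langle\psi^B_{a|x}|\psi^B_{a'|x'}\rangle| \le \sum_{j=0}^{d-1}|\lambda_j-\lambda|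 + \lambda\sqrt d$. -/
/-!
Both overlaps are weighted sums of the same relative phases `z j = e^{i(φ^j_{a|x} - φ^j_{a'|x'})}`:
`⟨ψ_{a|x}|ψ_{a'|x'}⟩ = ∑ⱼ λⱼ zⱼ` and `⟨A_{a'|x'}|A_{a|x}⟩ = (1/d) ∑ⱼ zⱼ`, so mutual unbiasedness says
`|∑ⱼ zⱼ| = √d`. Writing `λⱼ = (λⱼ - λ) + λ` and using `|zⱼ| = 1`, the triangle inequality gives the
bound.
-/

open Complex Finset ComplexConjugate

theorem norm_sum_smul_le_sum_abs_sub_add {ι E : Type*} [SeminormedAddCommGroup E]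
    [NormedSpace ℝ E] (s : Finset ι) (w : ι → ℝ) (z : ι → E) (hz : ∀ j ∈ s, ‖z j‖ ≤ 1)
    (c : ℝ) :
    ‖∑ j ∈ s, w j • z j‖ ≤ ∑ j ∈ s, |w j - c| + |c| * ‖∑ j ∈ s, z j‖ := by
  have hsplit : ∑ j ∈ s, w j • z j = ∑ j ∈ s, (w j - c) • z j + c • ∑ j ∈ s, z j := by
    simp only [sub_smul, sum_sub_distrib, smul_sum, sub_add_cancel]
  calc ‖∑ j ∈ s, w j • z j‖
      ≤ ∑ j ∈ s, ‖(w j - c) • z j‖ + ‖c • ∑ j ∈ s, z j‖ :=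
        hsplit ▸ (norm_add_le _ _).trans (by gcongr; exact norm_sum_le _ _)
    _ ≤ ∑ j ∈ s, |w j - c| + |c| * ‖∑ j ∈ s, z j‖ := by
        rw [norm_smul, Real.norm_eq_abs]
        gcongr with j hj
        rw [norm_smul, Real.norm_eq_abs]
        exact mul_le_of_le_one_right (abs_nonneg _) (hz j hj)

theorem conj_ofReal_mul_exp_mul_ofReal_mul_exp (r s θ η : ℝ) :
    conj ((r : ℂ) * exp (I * θ)) * ((s : ℂ) * exp (I * η)) =
      ((r * s : ℝ) : ℂ) * exp (I * ((η - θ : ℝ) : ℂ)) := by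
  rw [map_mul, conj_ofReal, ← exp_conj, map_mul, conj_I, conj_ofReal, mul_mul_mul_comm,
    ← exp_add]
  push_cast
  ring_nf

open Complex Finset in
theorem mub_post_measurement_overlap_bound_general
    (d : ℕ) (hd : 1 ≤ d) {X : Type*}
    (lam : Fin d → ℝ) (hlam0 : ∀ j, 0 ≤ lam j)
    (φ : X → Fin d → Fin d → ℝ)
    (A : X → Fin d → Fin d → ℂ)
    (hA : ∀ x a j, A x a j = (1 / Real.sqrt d : ℝ) * Complex.exp (Complex.I * (φ x a j)))
    (hMUB : ∀ x x' a a', x ≠ x' →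
      ‖∑ j, (starRingEnd ℂ) (A x a j) * A x' a' j‖ = 1 / Real.sqrt d)
    (ψ : X → Fin d → Fin d → ℂ)
    (hψ : ∀ x a j, ψ x a j = (Real.sqrt (lam j) : ℝ) * Complex.exp (-Complex.I * (φ x a j))) :
    ∀ lam0 : ℝ, 0 ≤ lam0 → ∀ x x' : X, x ≠ x' → ∀ a a' : Fin d,
      ‖∑ j, (starRingEnd ℂ) (ψ x a j) * ψ x' a' j‖ ≤
        (∑ j, |lam j - lam0|) + lam0 * Real.sqrt d := by
  intro lam0 hlam0' x x' hxx a a'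
  set z : Fin d → ℂ := fun j ↦ exp (I * ((φ x a j - φ x' a' j : ℝ) : ℂ))
  have hψz : ∑ j, conj (ψ x a j) * ψ x' a' j = ∑ j, lam j • z j := by
    refine sum_congr rfl fun j _ ↦ ?_
    have hneg : ∀ θ : ℝ, -I * θ = I * ((-θ : ℝ) : ℂ) := fun θ ↦ by push_cast; ring
    rw [hψ, hψ, hneg, hneg, conj_ofReal_mul_exp_mul_ofReal_mul_exp,
      Real.mul_self_sqrt (hlam0 j), real_smul, neg_sub_neg]
  have hAz : ∑ j, conj (A x' a' j) * A x a j = (1 / d : ℝ) • ∑ j, z j := by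
    rw [smul_sum]
    refine sum_congr rfl fun j _ ↦ ?_
    rw [hA, hA, conj_ofReal_mul_exp_mul_ofReal_mul_exp, real_smul, div_mul_div_comm, one_mul,
      Real.mul_self_sqrt d.cast_nonneg]
  have hz_sum : ‖∑ j, z j‖ = Real.sqrt d := by
    have hd' : (0 : ℝ) < d := by exact_mod_cast hd
    have h := hMUB x' x a' a hxx.symm
    rw [hAz, norm_smul, Real.norm_of_nonneg (by positivity)] at h
    field_simp at h
    nth_rw 2 [← Real.mul_self_sqrt hd'.le] at h
    exact mul_right_cancel₀ (Real.sqrt_pos.2 hd').ne' h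
  calc ‖∑ j, conj (ψ x a j) * ψ x' a' j‖
      ≤ ∑ j, |lam j - lam0| + |lam0| * ‖∑ j, z j‖ := hψz ▸
        norm_sum_smul_le_sum_abs_sub_add _ _ _ (fun j _ ↦ (norm_exp_I_mul_ofReal _).le) _
    _ = ∑ j, |lam j - lam0| + lam0 * Real.sqrt d := by rw [hz_sum, abs_of_nonneg hlam0']

open Complex Finset in
/-- Overlap bound for the post-measurement states of MUB measurements:
if `|A_{a|x}⟩ = (1/√d) ∑ⱼ e^{i φ^j_{a|x}} |j⟩` form mutually unbiased bases and
`|ψ_{a|x}⟩ = ∑ⱼ √λⱼ e^{-i φ^j_{a|x}} |j⟩`, then for `x ≠ x'` and any `λ ≥ 0`,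
`|⟨ψ_{a|x}|ψ_{a'|x'}⟩| ≤ ∑ⱼ |λⱼ - λ| + λ √d`. -/
theorem mub_post_measurement_overlap_bound
    (d : ℕ) (hd : 1 ≤ d) {X : Type*}
    (lam : Fin d → ℝ) (hlam0 : ∀ j, 0 ≤ lam j) (hlam1 : ∑ j, lam j = 1)
    (φ : X → Fin d → Fin d → ℝ)
    (A : X → Fin d → Fin d → ℂ)
    (hA : ∀ x a j, A x a j = (1 / Real.sqrt d : ℝ) * Complex.exp (Complex.I * (φ x a j)))
    (hMUB : ∀ x x' a a', x ≠ x' →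
      ‖∑ j, (starRingEnd ℂ) (A x a j) * A x' a' j‖ = 1 / Real.sqrt d)
    (ψ : X → Fin d → Fin d → ℂ)
    (hψ : ∀ x a j, ψ x a j = (Real.sqrt (lam j) : ℝ) * Complex.exp (-Complex.I * (φ x a j))) :
    ∀ lam0 : ℝ, 0 ≤ lam0 → ∀ x x' : X, x ≠ x' → ∀ a a' : Fin d,
      ‖∑ j, (starRingEnd ℂ) (ψ x a j) * ψ x' a' j‖ ≤
        (∑ j, |lam j - lam0|) + lam0 * Real.sqrt d :=
  mub_post_measurement_overlap_bound_general d hd lam hlam0 φ A hA hMUB ψ hψ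
end

section
/- Let $\ket{\psi}=\sum_{i=0}^{d-1}\sqrt{\lambda_i}\ket{ii}\in\mathbb{C}^d\otimes\mathbb{C}^d$ with $\lambda_0\ge\lambda_1\ge\cdots\ge\lambda_{d-1}\ge0$, $\sum_i\lambda_i=1$. Let $\{|A_l\rangle\langle A_l|\}_{l=1}^{m_A}$ and $\{|B_l\rangle\langle B_l|\}_{l=1}^{m_B}$ be rank-1 POVMs on $\mathbb{C}^d$ (i.e., $\sum_l |A_l\rangle\langle A_l|=\mathds{1}$, $\sum_l |B_l\rangle\langle B_l|=\mathds{1}$, with $\||A_l\rangle\|\le 1$). Then there exist indices $l,l'$ such that $|\langle\psi|A_l\otimes B_{l'}\rangle| \ge \frac{\sqrt{\lambda_0}-\sqrt{\lambda_1}\sqrt{(m_A-1)(m_B-1)}}{\sqrt{m_A m_B}}$. -/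
open Complex Finset in
private lemma exists_inv_card_le {m : ℕ} (hm : 1 ≤ m) (f : Fin m → ℝ)
    (hf : ∑ l, f l = 1) : ∃ l, (1 : ℝ) / m ≤ f l := by
  by_contra h
  push_neg at h
  have hne : (Finset.univ : Finset (Fin m)).Nonempty := by
    simpa [Finset.univ_nonempty_iff] using Fin.pos_iff_nonempty.mp (by omega)
  have := Finset.sum_lt_sum_of_nonempty hne (fun l _ => h l)
  rw [hf, Finset.sum_const, Finset.card_univ, Fintype.card_fin, nsmul_eq_mul] at this
  have hm' : (0:ℝ) < m := by exact_mod_cast Nat.lt_of_lt_of_le Nat.zero_lt_one hm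
  rw [mul_one_div, div_self (ne_of_gt hm')] at this
  exact lt_irrefl _ this

open Complex Finset in
/-- For a Schmidt-ordered state `|ψ⟩ = ∑ᵢ √λᵢ |ii⟩` and rank-1 POVMs
`{|A_l⟩⟨A_l|}` and `{|B_l⟩⟨B_l|}` with `m_A` and `m_B` outcomes, there are
elements `A = |A_l⟩⟨A_l|`, `B = |B_{l'}⟩⟨B_{l'}|` with
`|⟨ψ|A_l ⊗ B_{l'}⟩| ≥ (√λ₀ - √λ₁ √((m_A-1)(m_B-1)))/√(m_A m_B)`. -/
theorem local_content_povm_element_bound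
    (d mA mB : ℕ) (hd : 2 ≤ d) (hmA : 1 ≤ mA) (hmB : 1 ≤ mB)
    (lam : Fin d → ℝ) (hlam0 : ∀ j, 0 ≤ lam j) (hlam1 : ∑ j, lam j = 1)
    (hsorted : ∀ i j : Fin d, i ≤ j → lam j ≤ lam i)
    (A : Fin mA → Fin d → ℂ) (B : Fin mB → Fin d → ℂ)
    (hApovm : ∀ i j : Fin d,
      ∑ l, A l i * (starRingEnd ℂ) (A l j) = if i = j then 1 else 0)
    (hBpovm : ∀ i j : Fin d,
      ∑ l, B l i * (starRingEnd ℂ) (B l j) = if i = j then 1 else 0)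
    (hAnorm : ∀ l, ∑ i, ‖A l i‖ ^ 2 ≤ 1) (hBnorm : ∀ l, ∑ i, ‖B l i‖ ^ 2 ≤ 1)
    (ψ : Fin d × Fin d → ℂ)
    (hψ : ∀ p : Fin d × Fin d,
      ψ p = if p.1 = p.2 then (Real.sqrt (lam p.1) : ℂ) else 0) :
    ∃ l : Fin mA, ∃ l' : Fin mB,
      (Real.sqrt (lam ⟨0, by omega⟩) -
          Real.sqrt (lam ⟨1, by omega⟩) *
            Real.sqrt (((mA : ℝ) - 1) * ((mB : ℝ) - 1))) /
        Real.sqrt ((mA : ℝ) * mB) ≤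
      ‖∑ p : Fin d × Fin d, (starRingEnd ℂ) (ψ p) * (A l p.1 * B l' p.2)‖ := by
  set z0 : Fin d := ⟨0, by omega⟩ with hz0
  set z1 : Fin d := ⟨1, by omega⟩ with hz1
  have hmA' : (0:ℝ) < mA := by exact_mod_cast Nat.lt_of_lt_of_le Nat.zero_lt_one hmA
  have hmB' : (0:ℝ) < mB := by exact_mod_cast Nat.lt_of_lt_of_le Nat.zero_lt_one hmB
  -- sum of |A l z0|^2 = 1
  have hAsum : ∑ l, ‖A l z0‖ ^ 2 = 1 := by
    have := hApovm z0 z0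
    rw [if_pos rfl] at this
    have : ((∑ l, ‖A l z0‖ ^ 2 : ℝ) : ℂ) = 1 := by
      push_cast
      rw [← this]
      refine Finset.sum_congr rfl fun l _ => ?_
      rw [Complex.mul_conj, Complex.normSq_eq_norm_sq]
      norm_cast
    exact_mod_cast this
  have hBsum : ∑ l, ‖B l z0‖ ^ 2 = 1 := by
    have := hBpovm z0 z0
    rw [if_pos rfl] at this
    have : ((∑ l, ‖B l z0‖ ^ 2 : ℝ) : ℂ) = 1 := by
      push_cast
      rw [← this]
      refine Finset.sum_congr rfl fun l _ => ?_
      rw [Complex.mul_conj, Complex.normSq_eq_norm_sq]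
      norm_cast
    exact_mod_cast this
  obtain ⟨l, hl⟩ := exists_inv_card_le hmA _ hAsum
  obtain ⟨l', hl'⟩ := exists_inv_card_le hmB _ hBsum
  refine ⟨l, l', ?_⟩
  set a : ℝ := ‖A l z0‖ with ha
  set b : ℝ := ‖B l' z0‖ with hb
  -- diagonal form of the overlap
  have hS : ∑ p : Fin d × Fin d, (starRingEnd ℂ) (ψ p) * (A l p.1 * B l' p.2)
      = ∑ i, ((Real.sqrt (lam i) : ℂ) * (A l i * B l' i)) := by
    rw [Fintype.sum_prod_type]
    refine Finset.sum_congr rfl fun i _ => ?_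
    rw [Finset.sum_eq_single i]
    · rw [hψ (i, i)]
      simp [Complex.conj_ofReal]
    · intro j _ hj
      rw [hψ (i, j)]
      simp [Ne.symm hj]
    · simp
  rw [hS]
  set f : Fin d → ℂ := fun i => ((Real.sqrt (lam i) : ℂ) * (A l i * B l' i)) with hf
  have hsplit : ∑ i, f i = f z0 + ∑ i ∈ Finset.univ.erase z0, f i :=
    (Finset.add_sum_erase _ f (Finset.mem_univ z0)).symm
  -- lower bound by reverse triangle inequality
  have htri : Real.sqrt (lam z0) * a * b - ‖∑ i ∈ Finset.univ.erase z0, f i‖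
      ≤ ‖∑ i, f i‖ := by
    have h1 : ‖f z0‖ = Real.sqrt (lam z0) * a * b := by
      rw [hf]
      simp only [norm_mul, Complex.norm_real]
      rw [Real.norm_eq_abs, _root_.abs_of_nonneg (Real.sqrt_nonneg _), mul_assoc]
    have h2 : ‖f z0‖ ≤ ‖∑ i, f i‖ + ‖∑ i ∈ Finset.univ.erase z0, f i‖ := by
      calc ‖f z0‖ = ‖(∑ i, f i) - ∑ i ∈ Finset.univ.erase z0, f i‖ := by
            rw [hsplit, add_sub_cancel_right]
          _ ≤ ‖∑ i, f i‖ + ‖∑ i ∈ Finset.univ.erase z0, f i‖ := norm_sub_le _ _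
    linarith [h1 ▸ h2]
  -- bound the remainder
  have hrest : ‖∑ i ∈ Finset.univ.erase z0, f i‖
      ≤ Real.sqrt (lam z1) * (Real.sqrt (1 - 1/mA) * Real.sqrt (1 - 1/mB)) := by
    calc ‖∑ i ∈ Finset.univ.erase z0, f i‖
        ≤ ∑ i ∈ Finset.univ.erase z0, ‖f i‖ := norm_sum_le _ _
      _ = ∑ i ∈ Finset.univ.erase z0,
            Real.sqrt (lam i) * (‖A l i‖ * ‖B l' i‖) := by
          refine Finset.sum_congr rfl fun i _ => ?_
          rw [hf]
          simp only [norm_mul, Complex.norm_real]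
          rw [Real.norm_eq_abs, _root_.abs_of_nonneg (Real.sqrt_nonneg _)]
      _ ≤ ∑ i ∈ Finset.univ.erase z0,
            Real.sqrt (lam z1) * (‖A l i‖ * ‖B l' i‖) := by
          refine Finset.sum_le_sum fun i hi => ?_
          have hiz : z1 ≤ i := by
            have := Finset.ne_of_mem_erase hi
            have : i.val ≠ 0 := fun h => this (Fin.ext h)
            exact Fin.mk_le_of_le_val (by omega)
          exact mul_le_mul_of_nonneg_right
            (Real.sqrt_le_sqrt (hsorted _ _ hiz))
            (mul_nonneg (norm_nonneg _) (norm_nonneg _))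
      _ = Real.sqrt (lam z1) * ∑ i ∈ Finset.univ.erase z0, ‖A l i‖ * ‖B l' i‖ := by
          rw [Finset.mul_sum]
      _ ≤ Real.sqrt (lam z1) * (Real.sqrt (1 - 1/mA) * Real.sqrt (1 - 1/mB)) := by
          refine mul_le_mul_of_nonneg_left ?_ (Real.sqrt_nonneg _)
          calc ∑ i ∈ Finset.univ.erase z0, ‖A l i‖ * ‖B l' i‖
              ≤ Real.sqrt (∑ i ∈ Finset.univ.erase z0, ‖A l i‖ ^ 2)
                * Real.sqrt (∑ i ∈ Finset.univ.erase z0, ‖B l' i‖ ^ 2) :=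
                Real.sum_mul_le_sqrt_mul_sqrt _ _ _
            _ ≤ Real.sqrt (1 - 1/mA) * Real.sqrt (1 - 1/mB) := by
                have hA' : ∑ i ∈ Finset.univ.erase z0, ‖A l i‖ ^ 2 ≤ 1 - 1/mA := by
                  rw [Finset.sum_erase_eq_sub (Finset.mem_univ z0)]
                  have := hAnorm l
                  have := hl
                  linarith
                have hB' : ∑ i ∈ Finset.univ.erase z0, ‖B l' i‖ ^ 2 ≤ 1 - 1/mB := by
                  rw [Finset.sum_erase_eq_sub (Finset.mem_univ z0)]
                  have := hBnorm l'
                  have := hl'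
                  linarith
                exact mul_le_mul (Real.sqrt_le_sqrt hA') (Real.sqrt_le_sqrt hB')
                  (Real.sqrt_nonneg _) (Real.sqrt_nonneg _)
  -- lower bound on the main term
  have hmain : Real.sqrt (lam z0) * (1 / Real.sqrt ((mA:ℝ) * mB))
      ≤ Real.sqrt (lam z0) * a * b := by
    have haa : Real.sqrt (1/mA) ≤ a := by
      have : a = Real.sqrt (a ^ 2) := by
        rw [Real.sqrt_sq (norm_nonneg _)]
      rw [this]
      exact Real.sqrt_le_sqrt hl
    have hbb : Real.sqrt (1/mB) ≤ b := by
      have : b = Real.sqrt (b ^ 2) := by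
        rw [Real.sqrt_sq (norm_nonneg _)]
      rw [this]
      exact Real.sqrt_le_sqrt hl'
    have key : Real.sqrt (1/mA) * Real.sqrt (1/mB) = 1 / Real.sqrt ((mA:ℝ) * mB) := by
      rw [← Real.sqrt_mul (by positivity), one_div, one_div, ← mul_inv,
        Real.sqrt_inv, one_div]
    rw [mul_assoc, ← key]
    refine mul_le_mul_of_nonneg_left ?_ (Real.sqrt_nonneg _)
    exact mul_le_mul haa hbb (Real.sqrt_nonneg _) (norm_nonneg _)
  -- identity for the error term
  have hid : Real.sqrt (1 - 1/mA) * Real.sqrt (1 - 1/mB)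
      = Real.sqrt (((mA:ℝ) - 1) * ((mB:ℝ) - 1)) / Real.sqrt ((mA:ℝ) * mB) := by
    have e1 : (1 : ℝ) - 1/mA = ((mA:ℝ) - 1) / mA := by field_simp
    have e2 : (1 : ℝ) - 1/mB = ((mB:ℝ) - 1) / mB := by field_simp
    have h1 : (0:ℝ) ≤ (mA:ℝ) - 1 := by
      have : (1:ℝ) ≤ (mA:ℝ) := by exact_mod_cast hmA
      linarith
    have h2 : (0:ℝ) ≤ (mB:ℝ) - 1 := by
      have : (1:ℝ) ≤ (mB:ℝ) := by exact_mod_cast hmB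
      linarith
    rw [e1, e2, Real.sqrt_div h1, Real.sqrt_div h2,
      Real.sqrt_mul h1, Real.sqrt_mul hmA'.le]
    field_simp
  -- combine
  have final : (Real.sqrt (lam z0) -
      Real.sqrt (lam z1) * Real.sqrt (((mA:ℝ) - 1) * ((mB:ℝ) - 1)))
      / Real.sqrt ((mA:ℝ) * mB)
      ≤ Real.sqrt (lam z0) * a * b - ‖∑ i ∈ Finset.univ.erase z0, f i‖ := by
    have := hrest
    rw [hid] at this
    have hexp : (Real.sqrt (lam z0) -
        Real.sqrt (lam z1) * Real.sqrt (((mA:ℝ) - 1) * ((mB:ℝ) - 1)))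
        / Real.sqrt ((mA:ℝ) * mB)
        = Real.sqrt (lam z0) * (1 / Real.sqrt ((mA:ℝ) * mB))
          - Real.sqrt (lam z1) *
            (Real.sqrt (((mA:ℝ) - 1) * ((mB:ℝ) - 1)) / Real.sqrt ((mA:ℝ) * mB)) := by
      ring
    rw [hexp]
    linarith
  exact le_trans final htri
end
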